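/- arXiv:2504.06900 — 8 statements merged into one kernel-verified Lean document; each statement's English description precedes it below -/
import Mathlib

section
/- Let ρ : [0,1] → ℝ be positive and log-concave, and define J_ρ(x) = (∫₀ˣ ρ)(∫ₓ¹ ρ) / ((∫₀¹ ρ) ρ(x)). Then J_ρ(x) ≤ x(1-x) for all x ∈ (0,1). -/
/-!
Fix `x ∈ (0,1)`. Log-concavity gives a supporting line of `log ρ` at `x`, i.e. an exponential
weight `σ t = exp (c t + d)` with `ρ ≤ σ` on `[0,1]` and `ρ x = σ x`. Since
`J_ρ(x) = (A B / (A + B)) / ρ x` with `A = ∫₀ˣ ρ`, `B = ∫ₓ¹ ρ`, and `A B / (A + B)` is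
monotone in `A` and `B`, we get `J_ρ(x) ≤ J_σ(x)`. For the exponential weight, writing
`ψ(t) = ∫₀¹ e^{ts} ds`, one computes `J_σ(x) = x (1 - x) ψ(cx) ψ(c(1-x)) / ψ(c)`, and
`ψ(u) ψ(v) ≤ ψ(u + v)` for `uv ≥ 0` is Chebyshev's inequality for the similarly ordered
functions `e^{us}` and `e^{vs}`.
-/
open Real Set intervalIntegral MeasureTheory

noncomputable def J (ρ : ℝ → ℝ) (x : ℝ) : ℝ :=
  (∫ t in (0:ℝ)..x, ρ t) * (∫ t in x..1, ρ t) / ((∫ t in (0:ℝ)..1, ρ t) * ρ x)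

lemma mul_div_add_le_mul_div_add {a b a' b' : ℝ} (ha : 0 < a) (hb : 0 < b)
    (haa' : a ≤ a') (hbb' : b ≤ b') : a * b / (a + b) ≤ a' * b' / (a' + b') := by
  rw [div_le_div_iff₀ (by positivity) (by linarith)]
  nlinarith [mul_nonneg (mul_nonneg ha.le (ha.le.trans haa')) (sub_nonneg.2 hbb'),
    mul_nonneg (mul_nonneg hb.le (hb.le.trans hbb')) (sub_nonneg.2 haa')]

lemma J_le_J_of_le {ρ σ : ℝ → ℝ} {x : ℝ} (hx : x ∈ Ioo 0 1)
    (hρ : IntervalIntegrable ρ volume 0 1) (hσ : IntervalIntegrable σ volume 0 1)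
    (hpos : ∀ t ∈ Ioo 0 1, 0 < ρ t) (hle : ∀ t ∈ Icc 0 1, ρ t ≤ σ t) (heq : ρ x = σ x) :
    J ρ x ≤ J σ x := by
  have hx' : x ∈ uIcc (0:ℝ) 1 := by simpa using Ioo_subset_Icc_self hx
  have sub_left : uIcc 0 x ⊆ uIcc (0:ℝ) 1 := uIcc_subset_uIcc_left hx'
  have sub_right : uIcc x 1 ⊆ uIcc (0:ℝ) 1 := uIcc_subset_uIcc_right hx'
  have hρl := hρ.mono_set sub_left
  have hρr := hρ.mono_set sub_right
  have hσl := hσ.mono_set sub_left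
  have hσr := hσ.mono_set sub_right
  have hA : 0 < ∫ t in (0:ℝ)..x, ρ t :=
    intervalIntegral_pos_of_pos_on hρl (fun t ht => hpos t ⟨ht.1, ht.2.trans hx.2⟩) hx.1
  have hB : 0 < ∫ t in x..1, ρ t :=
    intervalIntegral_pos_of_pos_on hρr (fun t ht => hpos t ⟨hx.1.trans ht.1, ht.2⟩) hx.2
  have hAA' : ∫ t in (0:ℝ)..x, ρ t ≤ ∫ t in (0:ℝ)..x, σ t :=
    integral_mono_on hx.1.le hρl hσl fun t ht => hle t ⟨ht.1, ht.2.trans hx.2.le⟩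
  have hBB' : ∫ t in x..1, ρ t ≤ ∫ t in x..1, σ t :=
    integral_mono_on hx.2.le hρr hσr fun t ht => hle t ⟨hx.1.le.trans ht.1, ht.2⟩
  unfold J
  rw [← integral_add_adjacent_intervals hρl hρr, ← integral_add_adjacent_intervals hσl hσr,
    ← div_div, ← div_div, ← heq]
  exact div_le_div_of_nonneg_right (mul_div_add_le_mul_div_add hA hB hAA' hBB') (hpos x hx).le

noncomputable def expMean (t : ℝ) : ℝ := ∫ s in (0:ℝ)..1, exp (t * s)

lemma expMean_zero : expMean 0 = 1 := by simp [expMean]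

lemma expMean_pos (t : ℝ) : 0 < expMean t :=
  intervalIntegral_pos_of_pos ((by fun_prop : Continuous _).intervalIntegrable _ _)
    (fun _ => exp_pos _) one_pos

lemma expMean_mul_le_expMean_add {a b : ℝ} (hab : 0 ≤ a * b) :
    expMean a * expMean b ≤ expMean (a + b) := by
  rcases eq_or_ne b 0 with rfl | hb
  · simp [expMean_zero]
  -- Chebyshev's integral inequality, centred at a point where `exp (b * ·)` equals its mean.
  obtain ⟨s₀, hs₀⟩ : ∃ s₀, exp (b * s₀) = expMean b :=
    ⟨log (expMean b) / b, by rw [mul_div_cancel₀ _ hb, exp_log (expMean_pos b)]⟩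
  have hmono : Monovary (fun s => exp (a * s)) (fun s => exp (b * s)) := by
    intro i j hij
    rw [exp_lt_exp] at hij
    rw [exp_le_exp]
    nlinarith [mul_nonneg hab (sq_nonneg (j - i))]
  have hcheb :=
    integral_nonneg (μ := volume) zero_le_one fun s _ => hmono.sub_mul_sub_nonneg s₀ s
  have hexpand : ∀ s, (exp (a * s) - exp (a * s₀)) * (exp (b * s) - exp (b * s₀)) =
      exp ((a + b) * s) - expMean b * exp (a * s) - exp (a * s₀) * (exp (b * s) - expMean b) := by
    intro s
    rw [hs₀, add_mul, exp_add]
    ring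
  have hint {f : ℝ → ℝ} (hf : Continuous f) : IntervalIntegrable f volume 0 1 :=
    hf.intervalIntegrable _ _
  simp only [hexpand] at hcheb
  rw [integral_sub (hint (by fun_prop)) (hint (by fun_prop)),
    integral_sub (hint (by fun_prop)) (hint (by fun_prop)),
    intervalIntegral.integral_const_mul, intervalIntegral.integral_const_mul,
    integral_sub (hint (by fun_prop)) (hint (by fun_prop))] at hcheb
  simp only [intervalIntegral.integral_const, sub_zero, one_smul] at hcheb
  simp only [expMean] at hcheb ⊢
  linarith

lemma integral_exp_mul_add (a b c d : ℝ) :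
    ∫ t in a..b, exp (c * t + d) = (b - a) * exp (c * a + d) * expMean (c * (b - a)) := by
  have h := smul_integral_comp_add_mul (fun t => exp (c * t + d)) (b - a) a (a := 0) (b := 1)
  simp only [mul_zero, add_zero, mul_one, add_sub_cancel, smul_eq_mul] at h
  rw [← h, expMean, mul_assoc]
  congr 1
  rw [← intervalIntegral.integral_const_mul]
  refine intervalIntegral.integral_congr fun s _ => ?_
  simp only [← exp_add]
  ring_nf

lemma J_exp_le (c d : ℝ) {x : ℝ} (hx : x ∈ Ioo 0 1) :
    J (fun t => exp (c * t + d)) x ≤ x * (1 - x) := by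
  have hψ := expMean_mul_le_expMean_add (a := c * x) (b := c * (1 - x))
    (by nlinarith [mul_nonneg (mul_nonneg (sq_nonneg c) hx.1.le) (sub_nonneg.2 hx.2.le)])
  rw [show c * x + c * (1 - x) = c by ring] at hψ
  have hscale : 0 ≤ x * (1 - x) * exp d * exp (c * x + d) := by
    have := sub_pos.2 hx.2
    have := hx.1
    positivity
  unfold J
  rw [integral_exp_mul_add, integral_exp_mul_add, integral_exp_mul_add]
  simp only [sub_zero, mul_zero, zero_add, mul_one, one_mul]
  rw [div_le_iff₀ (by have := expMean_pos c; positivity)]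
  calc x * exp d * expMean (c * x) * ((1 - x) * exp (c * x + d) * expMean (c * (1 - x)))
      = x * (1 - x) * exp d * exp (c * x + d) * (expMean (c * x) * expMean (c * (1 - x))) := by
        ring
    _ ≤ x * (1 - x) * exp d * exp (c * x + d) * expMean c := mul_le_mul_of_nonneg_left hψ hscale
    _ = x * (1 - x) * (exp d * expMean c * exp (c * x + d)) := by ring

lemma ConcaveOn.exists_le_add_mul_sub {S : Set ℝ} {f : ℝ → ℝ} {x : ℝ}
    (hf : ConcaveOn ℝ S f) (hx : x ∈ interior S) : ∃ c, ∀ y ∈ S, f y ≤ f x + c * (y - x) := by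
  have hg : ConvexOn ℝ S (-f) := hf.neg
  refine ⟨-derivWithin (-f) (Ioi x) x, fun y hy => ?_⟩
  rcases lt_trichotomy y x with hyx | rfl | hxy
  · have h := (hg.slope_le_leftDeriv_of_mem_interior hy hx hyx).trans
      (hg.leftDeriv_le_rightDeriv_of_mem_interior hx)
    rw [slope_def_field, div_le_iff₀ (sub_pos.2 hyx)] at h
    simp only [Pi.neg_apply] at h
    linarith
  · simp
  · have h := hg.rightDeriv_le_slope_of_mem_interior hx hy hxy
    rw [slope_def_field, le_div_iff₀ (sub_pos.2 hxy)] at h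
    simp only [Pi.neg_apply] at h
    linarith

/-- For a positive, continuous, log-concave weight ρ on [0,1], the function
J_ρ(x) = (∫₀ˣ ρ)(∫ₓ¹ ρ)/((∫₀¹ ρ) ρ(x)) satisfies J_ρ(x) ≤ x(1-x) on (0,1). -/
theorem stmt0 (ρ : ℝ → ℝ)
    (hcont : ContinuousOn ρ (Icc 0 1))
    (hpos : ∀ x ∈ Icc (0:ℝ) 1, 0 < ρ x)
    (hlc : ConcaveOn ℝ (Icc 0 1) (fun x => Real.log (ρ x))) :
    ∀ x ∈ Ioo (0:ℝ) 1,
      (∫ t in (0:ℝ)..x, ρ t) * (∫ t in x..(1:ℝ), ρ t) /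
        ((∫ t in (0:ℝ)..(1:ℝ), ρ t) * ρ x) ≤ x * (1 - x) := by
  intro x hx
  obtain ⟨c, hc⟩ := hlc.exists_le_add_mul_sub (by rwa [interior_Icc])
  have hle : ∀ t ∈ Icc 0 1, ρ t ≤ exp (c * t + (log (ρ x) - c * x)) := fun t ht => by
    rw [← exp_log (hpos t ht)]
    exact exp_le_exp.2 (by linarith [hc t ht])
  have heq : ρ x = exp (c * x + (log (ρ x) - c * x)) := by
    rw [add_sub_cancel, exp_log (hpos x (Ioo_subset_Icc_self hx))]
  calc J ρ x ≤ J (fun t => exp (c * t + (log (ρ x) - c * x))) x :=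
        J_le_J_of_le hx (hcont.intervalIntegrable_of_Icc zero_le_one)
          ((by fun_prop : Continuous _).intervalIntegrable _ _)
          (fun t ht => hpos t (Ioo_subset_Icc_self ht)) hle heq
    _ ≤ x * (1 - x) := J_exp_le _ _ hx
end

section
/- For every a ≠ 0 and every x ∈ (0,1), ((e^{ax} - 1)(e^{a} - e^{ax})) / (a (e^{a} - 1) e^{ax}) < x(1 - x), with equality exactly at x = 0 and x = 1. -/
open Real Set

/-!
With `s = a x` and `t = a (1 - x)` the left-hand side is `x (1 - x) · g(s) g(t) / g(s + t)`, where
`g(u) = (eᵘ - 1) / u > 0`, so the claim is `g(s) g(t) < g(s + t)` for `s`, `t` of the same sign.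
Clearing denominators, this follows from the identity
`2 (s t (e^{s+t} - 1) - (s + t)(eˢ - 1)(eᵗ - 1)) = t (eᵗ - 1) χ(s) + s (eˢ - 1) χ(t)`
with `χ(u) = eᵘ (u - 2) + u + 2`, which has the sign of `u` (equivalently `tanh (u/2) < u/2` for
`u > 0`): `χ(0) = 0` and `χ'(u) = eᵘ (u - 1) + 1 > 0` for `u ≠ 0`, since `e⁻ᵘ > 1 - u`.
-/

theorem strictMono_of_hasDerivAt_pos_of_ne {f f' : ℝ → ℝ} {c : ℝ}
    (hf : ∀ x, HasDerivAt f (f' x) x) (hf' : ∀ x ≠ c, 0 < f' x) : StrictMono f := by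
  have hcont : Continuous f := continuous_iff_continuousAt.2 fun x ↦ (hf x).continuousAt
  refine StrictMonoOn.Iic_union_Ici (a := c) ?_ ?_
  · refine strictMonoOn_of_hasDerivWithinAt_pos (convex_Iic c) hcont.continuousOn
      (fun x _ ↦ (hf x).hasDerivWithinAt) fun x hx ↦ hf' x ?_
    rw [interior_Iic] at hx
    exact hx.ne
  · refine strictMonoOn_of_hasDerivWithinAt_pos (convex_Ici c) hcont.continuousOn
      (fun x _ ↦ (hf x).hasDerivWithinAt) fun x hx ↦ hf' x ?_
    rw [interior_Ici] at hx
    exact hx.ne'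

theorem exp_mul_sub_one_add_one_pos {u : ℝ} (hu : u ≠ 0) : 0 < exp u * (u - 1) + 1 := by
  have h := mul_lt_mul_of_pos_left (add_one_lt_exp (neg_ne_zero.2 hu)) (exp_pos u)
  rw [← exp_add, add_neg_cancel, exp_zero] at h
  linarith

theorem strictMono_exp_mul_sub_two_add_two :
    StrictMono fun u ↦ exp u * (u - 2) + u + 2 := by
  refine strictMono_of_hasDerivAt_pos_of_ne (c := 0) (fun u ↦ ?_)
    fun u hu ↦ exp_mul_sub_one_add_one_pos hu
  exact ((((hasDerivAt_exp u).mul ((hasDerivAt_id' u).sub_const 2)).add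
    (hasDerivAt_id' u)).add_const 2).congr_deriv (by ring)

theorem exp_mul_sub_two_add_two_pos {u : ℝ} (hu : 0 < u) : 0 < exp u * (u - 2) + u + 2 := by
  simpa using strictMono_exp_mul_sub_two_add_two hu

theorem exp_mul_sub_two_add_two_neg {u : ℝ} (hu : u < 0) : exp u * (u - 2) + u + 2 < 0 := by
  simpa using strictMono_exp_mul_sub_two_add_two hu

theorem mul_exp_sub_one_pos {u : ℝ} (hu : u ≠ 0) : 0 < u * (exp u - 1) := by
  rcases hu.lt_or_gt with hu | hu
  · exact mul_pos_of_neg_of_neg hu (sub_neg.2 (exp_lt_one_iff.2 hu))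
  · exact mul_pos hu (sub_pos.2 (one_lt_exp_iff.2 hu))

theorem two_mul_sub_mul_exp_sub_one (s t : ℝ) :
    2 * (s * t * (exp (s + t) - 1) - (s + t) * (exp s - 1) * (exp t - 1)) =
      t * (exp t - 1) * (exp s * (s - 2) + s + 2) +
        s * (exp s - 1) * (exp t * (t - 2) + t + 2) := by
  rw [exp_add]
  ring

theorem exp_sub_one_div_mul_lt {s t : ℝ} (hst : 0 < s * t) :
    (exp s - 1) / s * ((exp t - 1) / t) < (exp (s + t) - 1) / (s + t) := by
  have hs0 : s ≠ 0 := left_ne_zero_of_mul hst.ne'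
  have ht0 : t ≠ 0 := right_ne_zero_of_mul hst.ne'
  have hs := mul_exp_sub_one_pos hs0
  have ht := mul_exp_sub_one_pos ht0
  have hN : 0 < (s + t) *
      (2 * (s * t * (exp (s + t) - 1) - (s + t) * (exp s - 1) * (exp t - 1))) := by
    rw [two_mul_sub_mul_exp_sub_one]
    rcases mul_pos_iff.1 hst with ⟨hs0, ht0⟩ | ⟨hs0, ht0⟩
    · exact mul_pos (add_pos hs0 ht0) (add_pos (mul_pos ht (exp_mul_sub_two_add_two_pos hs0))
        (mul_pos hs (exp_mul_sub_two_add_two_pos ht0)))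
    · exact mul_pos_of_neg_of_neg (add_neg hs0 ht0)
        (add_neg (mul_neg_of_pos_of_neg ht (exp_mul_sub_two_add_two_neg hs0))
          (mul_neg_of_pos_of_neg hs (exp_mul_sub_two_add_two_neg ht0)))
  have hst0 : s + t ≠ 0 := left_ne_zero_of_mul hN.ne'
  refine sub_pos.1 ((div_pos hN (mul_pos (mul_pos two_pos hst) (mul_self_pos.2 hst0))).trans_eq ?_)
  field_simp

/-- For a ≠ 0, the quantity ((e^{ax}-1)(e^a-e^{ax}))/(a(e^a-1)e^{ax}) is strictly
below x(1-x) on (0,1), with equality exactly at x = 0 and x = 1. -/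
theorem stmt1 (a : ℝ) (ha : a ≠ 0) :
    (∀ x ∈ Ioo (0:ℝ) 1,
      (Real.exp (a*x) - 1) * (Real.exp a - Real.exp (a*x)) /
        (a * (Real.exp a - 1) * Real.exp (a*x)) < x * (1 - x)) ∧
    (∀ x : ℝ, x = 0 ∨ x = 1 →
      (Real.exp (a*x) - 1) * (Real.exp a - Real.exp (a*x)) /
        (a * (Real.exp a - 1) * Real.exp (a*x)) = x * (1 - x)) := by
  refine ⟨fun x ⟨hx0, hx1⟩ ↦ ?_, by rintro x (rfl | rfl) <;> simp⟩
  have hx1' : 0 < 1 - x := sub_pos.2 hx1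
  have hsum : a * x + a * (1 - x) = a := by ring
  have hg := exp_sub_one_div_mul_lt (s := a * x) (t := a * (1 - x))
    (by rw [mul_mul_mul_comm]; exact mul_pos (mul_self_pos.2 ha) (mul_pos hx0 hx1'))
  rw [hsum] at hg
  have hga : 0 < (exp a - 1) / a := by
    have h := mul_exp_sub_one_pos ha
    rw [mul_comm] at h
    exact div_pos_iff.2 (mul_pos_iff.1 h)
  have hE : exp a = exp (a * x) * exp (a * (1 - x)) := by rw [← exp_add, hsum]
  calc (exp (a * x) - 1) * (exp a - exp (a * x)) / (a * (exp a - 1) * exp (a * x))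
      = x * (1 - x) * ((exp (a * x) - 1) / (a * x) * ((exp (a * (1 - x)) - 1) / (a * (1 - x))) /
          ((exp a - 1) / a)) := by
        field_simp
        rw [hE]
        ring
    _ < x * (1 - x) := mul_lt_of_lt_one_right (mul_pos hx0 hx1') ((div_lt_one hga).2 hg)
end

section
/- Let r : [0, Θ] → ℝ be nonnegative and integrable, and suppose δ(t) := (1/t)∫₀ᵗ r(θ)dθ satisfies δ(t) ≤ δ* for all t ∈ (0, Θ]. Then (∫₀^Θ r(t)dt)² ≤ 2 δ* ∫₀^Θ r(t) t dt. -/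
open Real Set MeasureTheory

/-- If r ≥ 0 is integrable on [0,Θ] and its averages δ(t)=(1/t)∫₀ᵗ r are bounded by δ*,
then (∫₀^Θ r)² ≤ 2 δ* ∫₀^Θ r(t) t dt. -/
theorem stmt5 (Θ δstar : ℝ) (hΘ : 0 < Θ) (hδ : 0 ≤ δstar) (r : ℝ → ℝ)
    (hnn : ∀ t ∈ Icc (0:ℝ) Θ, 0 ≤ r t)
    (hint : IntervalIntegrable r volume 0 Θ)
    (havg : ∀ t ∈ Ioc (0:ℝ) Θ, (1/t) * ∫ s in (0:ℝ)..t, r s ≤ δstar) :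
    (∫ t in (0:ℝ)..Θ, r t)^2 ≤ 2 * δstar * ∫ t in (0:ℝ)..Θ, r t * t := by
  set I : Set ℝ := Ioc (0:ℝ) Θ with hIdef
  have hrI : IntegrableOn r I := hint.1
  have hrIcc : IntegrableOn r (Icc 0 Θ) := by
    rwa [integrableOn_Icc_iff_integrableOn_Ioc]
  set F : ℝ → ℝ := fun t => ∫ s in Ioc (0:ℝ) t, r s with hFdef
  have hFcont : ContinuousOn F (Icc 0 Θ) :=
    intervalIntegral.continuousOn_primitive hrIcc
  -- F t ≤ δstar * t on I
  have hFle : ∀ t ∈ I, F t ≤ δstar * t := by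
    intro t ht
    have h1 := havg t ht
    rw [intervalIntegral.integral_of_le ht.1.le] at h1
    have ht0 : 0 < t := ht.1
    calc F t = t * ((1/t) * F t) := by field_simp
    _ ≤ t * δstar := by
        have := mul_le_mul_of_nonneg_left h1 ht0.le
        simpa using this
    _ = δstar * t := mul_comm _ _
  -- splitting the integral
  have hsplit : ∀ t ∈ I, (∫ s in Ioc t Θ, r s) = F Θ - F t := by
    intro t ht
    have h1 : IntervalIntegrable r volume 0 t :=
      hint.mono_set (by rw [uIcc_of_le ht.1.le, uIcc_of_le hΘ.le]; exact Icc_subset_Icc le_rfl ht.2)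
    have h2 : IntervalIntegrable r volume t Θ :=
      hint.mono_set (by rw [uIcc_of_le ht.2, uIcc_of_le hΘ.le]; exact Icc_subset_Icc ht.1.le le_rfl)
    have h3 := intervalIntegral.integral_add_adjacent_intervals h1 h2
    rw [intervalIntegral.integral_of_le ht.1.le, intervalIntegral.integral_of_le ht.2,
      intervalIntegral.integral_of_le hΘ.le] at h3
    have : F t + ∫ s in Ioc t Θ, r s = F Θ := h3
    linarith
  -- integrability of r*F and r*t on I
  have hK : IsCompact (Icc (0:ℝ) Θ) := isCompact_Icc
  have hrF : IntegrableOn (fun t => r t * F t) I := by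
    have := hrIcc.mul_continuousOn hFcont hK
    exact this.mono_set Ioc_subset_Icc_self
  have hrt : IntegrableOn (fun t => r t * t) I := by
    have := hrIcc.mul_continuousOn (continuousOn_id) hK
    exact this.mono_set Ioc_subset_Icc_self
  -- Fubini setup
  set μ := volume.restrict I with hμdef
  have hrμ : Integrable r μ := hrI
  have hprod : Integrable (fun p : ℝ × ℝ => r p.1 * r p.2) (μ.prod μ) :=
    hrμ.mul_prod hrμ
  have hsetm : MeasurableSet {p : ℝ × ℝ | p.2 ≤ p.1} :=
    measurableSet_le measurable_snd measurable_fst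
  have hf : Integrable (Function.uncurry fun s t => r s * (Iic s).indicator r t) (μ.prod μ) := by
    have h := hprod.indicator hsetm
    refine h.congr (Filter.Eventually.of_forall ?_)
    rintro ⟨s, t⟩
    simp only [Function.uncurry, Set.indicator_apply, mem_Iic, Set.mem_setOf_eq]
    by_cases h : t ≤ s <;> simp [h]
  have hswap := MeasureTheory.integral_integral_swap hf
  -- LHS of swap: ∫ s, r s * F s
  have hL : (∫ s, ∫ t, r s * (Iic s).indicator r t ∂μ ∂μ) = ∫ s in I, r s * F s := by
    rw [hμdef]
    refine setIntegral_congr_fun measurableSet_Ioc ?_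
    intro s hs
    have hinner : (∫ t, (Iic s).indicator r t ∂(volume.restrict I)) = F s := by
      rw [integral_indicator measurableSet_Iic,
        Measure.restrict_restrict measurableSet_Iic]
      have hset : Iic s ∩ I = Ioc 0 s := by
        ext x
        simp only [mem_inter_iff, mem_Iic, hIdef, mem_Ioc]
        constructor
        · rintro ⟨h1, h2, h3⟩; exact ⟨h2, h1⟩
        · rintro ⟨h1, h2⟩; exact ⟨h2, h1, h2.trans hs.2⟩
      rw [hset]
    simp only [integral_const_mul]
    rw [hinner]
  -- RHS of swap: ∫ t, r t * (F Θ - F t)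
  have hR : (∫ t, ∫ s, r s * (Iic s).indicator r t ∂μ ∂μ) = ∫ t in I, r t * (F Θ - F t) := by
    rw [hμdef]
    refine setIntegral_congr_fun measurableSet_Ioc ?_
    intro t ht
    have heq : ∀ s : ℝ, r s * (Iic s).indicator r t
        = (Ici t).indicator (fun s => r s * r t) s := by
      intro s
      simp only [Set.indicator_apply, mem_Iic, mem_Ici]
      by_cases h : t ≤ s <;> simp [h]
    calc (∫ s, r s * (Iic s).indicator r t ∂(volume.restrict I))
        = ∫ s, (Ici t).indicator (fun s => r s * r t) s ∂(volume.restrict I) := by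
          exact integral_congr_ae (Filter.Eventually.of_forall heq)
      _ = ∫ s in Ici t ∩ I, r s * r t := by
          rw [integral_indicator measurableSet_Ici,
            Measure.restrict_restrict measurableSet_Ici]
      _ = ∫ s in Icc t Θ, r s * r t := by
          have hset : Ici t ∩ I = Icc t Θ := by
            ext x
            simp only [mem_inter_iff, mem_Ici, hIdef, mem_Ioc, mem_Icc]
            constructor
            · rintro ⟨h1, h2, h3⟩; exact ⟨h1, h3⟩
            · rintro ⟨h1, h2⟩; exact ⟨h1, lt_of_lt_of_le ht.1 h1, h2⟩
          rw [hset]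
      _ = ∫ s in Ioc t Θ, r s * r t := integral_Icc_eq_integral_Ioc
      _ = (∫ s in Ioc t Θ, r s) * r t := by rw [integral_mul_const]
      _ = r t * (F Θ - F t) := by rw [hsplit t ht, mul_comm]
  have hkey : ∫ t in I, r t * F t = ∫ t in I, r t * (F Θ - F t) := by
    rw [← hL, ← hR]; exact hswap
  -- F Θ ^ 2 = 2 ∫ r F
  have hsq : F Θ ^ 2 = 2 * ∫ t in I, r t * F t := by
    have h1 : IntegrableOn (fun t => r t * (F Θ - F t)) I := by
      have : (fun t => r t * (F Θ - F t)) = fun t => r t * F Θ - r t * F t := by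
        ext t; ring
      rw [this]
      exact (hrI.mul_const (F Θ)).sub hrF
    have h2 : (∫ t in I, (r t * F t + r t * (F Θ - F t))) = ∫ t in I, r t * F Θ := by
      apply integral_congr_ae
      filter_upwards with t
      ring
    rw [integral_add hrF h1, ← hkey] at h2
    have h3 : (∫ t in I, r t * F Θ) = F Θ * F Θ := by
      rw [integral_mul_const]
    rw [h3] at h2
    nlinarith [h2]
  -- monotonicity
  have hmono : (∫ t in I, r t * F t) ≤ ∫ t in I, δstar * (r t * t) := by
    refine setIntegral_mono_on hrF (hrt.const_mul δstar) measurableSet_Ioc ?_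
    intro t ht
    have hr0 : 0 ≤ r t := hnn t ⟨ht.1.le, ht.2⟩
    have := mul_le_mul_of_nonneg_left (hFle t ht) hr0
    calc r t * F t ≤ r t * (δstar * t) := this
      _ = δstar * (r t * t) := by ring
  rw [intervalIntegral.integral_of_le hΘ.le, intervalIntegral.integral_of_le hΘ.le]
  calc (∫ t in Ioc (0:ℝ) Θ, r t) ^ 2 = F Θ ^ 2 := rfl
    _ = 2 * ∫ t in I, r t * F t := hsq
    _ ≤ 2 * ∫ t in I, δstar * (r t * t) := by linarith [hmono]
    _ = 2 * δstar * ∫ t in Ioc (0:ℝ) Θ, r t * t := by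
        rw [integral_const_mul]; ring
end

section
/- The function f(θ) := 12 sin θ - 6 sin θ cos θ - 6θ - sin³θ cos θ - θ sin²θ is nonnegative on (0, π/2). -/
open Real Set

private noncomputable def F6 : ℝ → ℝ := fun θ =>
  12 * Real.sin θ - 6 * Real.sin θ * Real.cos θ - 6 * θ
    - (Real.sin θ)^3 * Real.cos θ - θ * (Real.sin θ)^2

private lemma F6_hasDerivAt (θ : ℝ) :
    HasDerivAt F6 (2 * Real.cos θ * (6 - 8 * Real.cos θ + 2 * (Real.cos θ)^3
      - θ * Real.sin θ)) θ := by
  have hs := Real.hasDerivAt_sin θ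
  have hc := Real.hasDerivAt_cos θ
  have hid : HasDerivAt (fun x : ℝ => x) 1 θ := hasDerivAt_id θ
  have h : HasDerivAt F6
      (12 * Real.cos θ - (6 * Real.cos θ * Real.cos θ + 6 * Real.sin θ * (-Real.sin θ))
        - 6 * 1
        - ((3 * (Real.sin θ)^2 * Real.cos θ) * Real.cos θ + (Real.sin θ)^3 * (-Real.sin θ))
        - (1 * (Real.sin θ)^2 + θ * (2 * (Real.sin θ)^1 * Real.cos θ))) θ := by
    unfold F6
    exact ((((hs.const_mul 12).sub (((hs.const_mul 6).mul hc))).sub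
      (hid.const_mul 6)).sub ((hs.pow 3).mul hc)).sub (hid.mul (hs.pow 2))
  convert h using 1
  have h1 := Real.sin_sq_add_cos_sq θ
  ring_nf
  nlinarith [h1, sq_nonneg (Real.sin θ), sq_nonneg (Real.cos θ)]

private lemma F6_deriv_nonneg {θ : ℝ} (hθ : θ ∈ Ioo (0:ℝ) (π/2)) :
    0 ≤ 2 * Real.cos θ * (6 - 8 * Real.cos θ + 2 * (Real.cos θ)^3 - θ * Real.sin θ) := by
  obtain ⟨h0, h2⟩ := hθ
  set c := Real.cos θ with hcdef
  set s := Real.sin θ with hsdef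
  have hc : 0 < c := Real.cos_pos_of_mem_Ioo ⟨by linarith [Real.pi_pos], h2⟩
  have hc1 : c ≤ 1 := Real.cos_le_one θ
  have hs : 0 < s := Real.sin_pos_of_pos_of_lt_pi h0 (by linarith [Real.pi_pos])
  have hs1 : s ≤ 1 := Real.sin_le_one θ
  have key : 0 ≤ 6 - 8 * c + 2 * c^3 - θ * s := by
    rcases le_or_gt (1/2 : ℝ) c with hhalf | hhalf
    · -- use θ < tan θ = s / c
      have htan : θ < Real.tan θ := Real.lt_tan h0 h2
      have htan' : θ < s / c := by rwa [Real.tan_eq_sin_div_cos] at htan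
      have hθs : θ * s < s^2 / c := by
        have := mul_lt_mul_of_pos_right htan' hs
        calc θ * s < s / c * s := this
          _ = s^2 / c := by ring
      have hpoly : s^2 / c ≤ 6 - 8 * c + 2 * c^3 := by
        rw [div_le_iff₀ hc]
        have hsq : s^2 = 1 - c^2 := by nlinarith [Real.sin_sq_add_cos_sq θ]
        rw [hsq]
        nlinarith [sq_nonneg (c - 1), sq_nonneg c]
      linarith
    · -- c ≤ 1/2 : θ * s ≤ π/2 ≤ 2 ≤ 6 - 8c + 2c³
      have hθs : θ * s ≤ 2 := by
        have h1 : θ * s ≤ θ := by nlinarith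
        have : θ ≤ 2 := by linarith [Real.pi_le_four]
        linarith
      nlinarith [pow_pos hc 3]
  positivity

/-- f(θ) = 12 sin θ - 6 sin θ cos θ - 6θ - sin³θ cos θ - θ sin²θ ≥ 0 on (0, π/2). -/
theorem stmt6 :
    ∀ θ ∈ Ioo (0:ℝ) (π/2),
      0 ≤ 12 * Real.sin θ - 6 * Real.sin θ * Real.cos θ - 6 * θ
          - (Real.sin θ)^3 * Real.cos θ - θ * (Real.sin θ)^2 := by
  intro θ hθ
  have hmono : MonotoneOn F6 (Icc 0 (π/2)) := by
    apply monotoneOn_of_deriv_nonneg (convex_Icc 0 (π/2))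
    · exact fun x _ => ((F6_hasDerivAt x).continuousAt).continuousWithinAt
    · intro x hx
      exact (F6_hasDerivAt x).differentiableAt.differentiableWithinAt
    · intro x hx
      rw [interior_Icc] at hx
      rw [(F6_hasDerivAt x).deriv]
      exact F6_deriv_nonneg hx
  have h0 : F6 0 = 0 := by simp [F6]
  have hle : F6 0 ≤ F6 θ := by
    apply hmono (left_mem_Icc.2 (by linarith [Real.pi_pos])) ⟨hθ.1.le, hθ.2.le⟩ hθ.1.le
  rw [h0] at hle
  exact hle
end

section
/- The function g(θ) := 6(1 - cos θ)/sin θ - 2 sin θ cos θ - θ is nonnegative on (0, π/2), and its derivative equals (3(1 - cos θ)² + 4 sin⁴θ)/sin²θ, which is nonnegative. -/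
open Real Set

/-- g(θ) = 6(1-cos θ)/sin θ - 2 sin θ cos θ - θ is nonnegative on (0,π/2),
and its derivative equals (3(1-cos θ)² + 4 sin⁴θ)/sin²θ, which is nonnegative. -/
theorem stmt7 :
    ∀ θ ∈ Ioo (0:ℝ) (π/2),
      0 ≤ 6 * (1 - Real.cos θ) / Real.sin θ - 2 * Real.sin θ * Real.cos θ - θ ∧
      deriv (fun θ : ℝ =>
          6 * (1 - Real.cos θ) / Real.sin θ - 2 * Real.sin θ * Real.cos θ - θ) θ
        = (3 * (1 - Real.cos θ)^2 + 4 * (Real.sin θ)^4) / (Real.sin θ)^2 ∧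
      0 ≤ (3 * (1 - Real.cos θ)^2 + 4 * (Real.sin θ)^4) / (Real.sin θ)^2 := by
  rintro θ ⟨hθ0, hθπ⟩
  have hπ := Real.pi_pos
  have hs : 0 < Real.sin θ := Real.sin_pos_of_pos_of_lt_pi hθ0 (by linarith)
  have hs' : Real.sin θ ≠ 0 := ne_of_gt hs
  refine ⟨?_, ?_, ?_⟩
  · set t := θ / 2 with ht
    have ht0 : 0 < t := by rw [ht]; linarith
    have ht2 : t < π / 2 := by rw [ht]; linarith
    have hst : 0 < Real.sin t := Real.sin_pos_of_pos_of_lt_pi ht0 (by linarith)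
    have hct : 0 < Real.cos t := Real.cos_pos_of_mem_Ioo ⟨by linarith, ht2⟩
    have htan : t < Real.tan t := Real.lt_tan ht0 ht2
    rw [Real.tan_eq_sin_div_cos] at htan
    have hθt : θ = 2 * t := by rw [ht]; ring
    have hsin2 : Real.sin θ = 2 * Real.sin t * Real.cos t := by
      rw [hθt, Real.sin_two_mul]
    have hcos2 : Real.cos θ = 1 - 2 * Real.sin t ^ 2 := by
      rw [hθt, Real.cos_two_mul']
      have := Real.sin_sq_add_cos_sq t
      linarith
    have hsinlt : 2 * Real.sin θ * Real.cos θ < 2 * θ := by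
      have h := Real.sin_lt (show (0:ℝ) < 2 * θ by linarith)
      rw [Real.sin_two_mul] at h
      linarith
    have key : 6 * (1 - Real.cos θ) / Real.sin θ = 6 * (Real.sin t / Real.cos t) := by
      rw [hsin2, hcos2]; field_simp; ring
    have h1 : 3 * θ ≤ 6 * (1 - Real.cos θ) / Real.sin θ := by
      rw [key, hθt]
      have : t ≤ Real.sin t / Real.cos t := le_of_lt htan
      linarith
    linarith
  · have hnum : HasDerivAt (fun x : ℝ => 6 * (1 - Real.cos x)) (6 * Real.sin θ) θ := by
      have := ((Real.hasDerivAt_cos θ).const_sub 1).const_mul (6:ℝ)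
      simpa using this
    have hdiv : HasDerivAt (fun x : ℝ => 6 * (1 - Real.cos x) / Real.sin x)
        ((6 * Real.sin θ * Real.sin θ - 6 * (1 - Real.cos θ) * Real.cos θ) / Real.sin θ ^ 2) θ :=
      hnum.div (Real.hasDerivAt_sin θ) hs'
    have hprod : HasDerivAt (fun x : ℝ => 2 * Real.sin x * Real.cos x)
        (2 * Real.cos θ * Real.cos θ + 2 * Real.sin θ * -Real.sin θ) θ :=
      ((Real.hasDerivAt_sin θ).const_mul 2).mul (Real.hasDerivAt_cos θ)
    have htot : HasDerivAt (fun x : ℝ =>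
          6 * (1 - Real.cos x) / Real.sin x - 2 * Real.sin x * Real.cos x - x)
        ((6 * Real.sin θ * Real.sin θ - 6 * (1 - Real.cos θ) * Real.cos θ) / Real.sin θ ^ 2 -
          (2 * Real.cos θ * Real.cos θ + 2 * Real.sin θ * -Real.sin θ) - 1) θ :=
      (hdiv.sub hprod).sub (hasDerivAt_id θ)
    rw [htot.deriv]
    have hsq := Real.sin_sq_add_cos_sq θ
    field_simp
    nlinarith [hsq, sq_nonneg (Real.sin θ), sq_nonneg (Real.cos θ)]
  · positivity
end

section
/- For θ ∈ (0, π/2), let ρ = (sin θ)/2 and |E| = (1/2) cos θ sin θ + θ/4 - (1/8) sin(2θ). Then 2(ρ - |E|)/(ρ² |E|) = 8 (2 sin θ - sin θ cos θ - θ) / (sin²θ (sin θ cos θ + θ)), and this quantity is ≥ 4/3. -/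
/-!
After `sin 2θ = 2 sin θ cos θ` the identity is algebra, and the inequality is equivalent to
`sin² θ (sin θ cos θ + θ) ≤ 6 (2 sin θ - sin θ cos θ - θ)`. The two sides agree up to order `θ⁴`
at `0` (the gap is `19 θ⁵ / 30 + O(θ⁷)`), so the sines are replaced by Taylor polynomials on the
correct side: `sin θ` by `S₇(θ)` from below and `S₅(θ)` from above, `sin 2θ` by `S₉(2θ)` from
above. On `x ≥ 0` the remainders of the Taylor polynomials of `sin` and `cos` alternate in sign,
by integrating `1 - cos ≥ 0` repeatedly. What is left is `θ⁵` times a polynomial of degree 7 in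
`θ²`, which is positive on `[0, (π/2)²]`.
-/

open Real Set
open scoped Nat

theorem le_of_hasDerivAt_nonneg {f f' : ℝ → ℝ} {a x : ℝ} (hf : ∀ y, HasDerivAt f (f' y) y)
    (hf' : ∀ y, a ≤ y → 0 ≤ f' y) (hx : a ≤ x) : f a ≤ f x := by
  refine monotoneOn_of_hasDerivWithinAt_nonneg (convex_Ici a)
    (fun y _ ↦ (hf y).continuousAt.continuousWithinAt) (fun y _ ↦ (hf y).hasDerivWithinAt)
    (fun y hy ↦ hf' y ?_) self_mem_Ici hx hx
  rw [interior_Ici] at hy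
  exact hy.le

namespace Real

noncomputable def sinTaylor (n : ℕ) (x : ℝ) : ℝ :=
  ∑ k ∈ Finset.range n, (-1) ^ k * x ^ (2 * k + 1) / (2 * k + 1)!

noncomputable def cosTaylor (n : ℕ) (x : ℝ) : ℝ :=
  ∑ k ∈ Finset.range n, (-1) ^ k * x ^ (2 * k) / (2 * k)!

@[simp] theorem sinTaylor_zero_right (n : ℕ) : sinTaylor n 0 = 0 := by
  simp [sinTaylor]

@[simp] theorem cosTaylor_succ_zero_right (n : ℕ) : cosTaylor (n + 1) 0 = 1 := by
  simp [cosTaylor, Finset.sum_range_succ']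

theorem hasDerivAt_sinTaylor (n : ℕ) (x : ℝ) :
    HasDerivAt (sinTaylor n) (cosTaylor n x) x := by
  unfold sinTaylor cosTaylor
  refine HasDerivAt.fun_sum fun k _ ↦ ?_
  refine (((hasDerivAt_pow (2 * k + 1) x).const_mul ((-1 : ℝ) ^ k)).div_const _).congr_deriv ?_
  rw [Nat.factorial_succ]
  push_cast
  field_simp

theorem hasDerivAt_cosTaylor_succ (n : ℕ) (x : ℝ) :
    HasDerivAt (cosTaylor (n + 1)) (-sinTaylor n x) x := by
  have h : cosTaylor (n + 1) = fun x ↦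
      ∑ k ∈ Finset.range n, (-1 : ℝ) ^ (k + 1) * x ^ (2 * k + 2) / (2 * k + 2)! + 1 := by
    funext x
    simp [cosTaylor, Finset.sum_range_succ', mul_add]
  rw [h, sinTaylor, ← Finset.sum_neg_distrib]
  refine (HasDerivAt.fun_sum fun k _ ↦ ?_).add_const 1
  refine (((hasDerivAt_pow (2 * k + 2) x).const_mul ((-1 : ℝ) ^ (k + 1))).div_const _).congr_deriv ?_
  rw [show 2 * k + 2 = 2 * k + 1 + 1 by ring, Nat.factorial_succ]
  push_cast
  field_simp
  ring

theorem neg_one_pow_mul_taylor_sub_nonneg (n : ℕ) {x : ℝ} (hx : 0 ≤ x) :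
    0 ≤ (-1) ^ n * (sinTaylor (n + 1) x - sin x) ∧
      0 ≤ (-1) ^ n * (cosTaylor (n + 1) x - cos x) := by
  induction n generalizing x with
  | zero => simpa [sinTaylor, cosTaylor] using ⟨sin_le hx, cos_le_one x⟩
  | succ n ih =>
    have hcos : ∀ y, 0 ≤ y → 0 ≤ (-1) ^ (n + 1) * (cosTaylor (n + 2) y - cos y) := by
      intro y hy
      simpa using le_of_hasDerivAt_nonneg
        (fun z ↦ ((hasDerivAt_cosTaylor_succ (n + 1) z).sub (hasDerivAt_cos z)).const_mul
          ((-1 : ℝ) ^ (n + 1)))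
        (fun z hz ↦ by linear_combination (ih hz).1) hy
    refine ⟨?_, hcos x hx⟩
    simpa using le_of_hasDerivAt_nonneg
      (fun z ↦ ((hasDerivAt_sinTaylor (n + 2) z).sub (hasDerivAt_sin z)).const_mul
        ((-1 : ℝ) ^ (n + 1))) hcos hx

theorem sin_le_sinTaylor_of_even {n : ℕ} (hn : Even n) {x : ℝ} (hx : 0 ≤ x) :
    sin x ≤ sinTaylor (n + 1) x := by
  have h := (neg_one_pow_mul_taylor_sub_nonneg n hx).1
  rw [hn.neg_one_pow, one_mul] at h
  linarith

theorem sinTaylor_le_sin_of_odd {n : ℕ} (hn : Odd n) {x : ℝ} (hx : 0 ≤ x) :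
    sinTaylor (n + 1) x ≤ sin x := by
  have h := (neg_one_pow_mul_taylor_sub_nonneg n hx).1
  rw [hn.neg_one_pow, neg_one_mul] at h
  linarith

end Real

/- `θ⁵` times this polynomial at `u = θ²` is
`6 (2 S₇(θ) - S₉(2θ)/2 - θ) - S₅(θ)² (S₉(2θ)/2 + θ)`, with `Sₖ` the Taylor polynomials of `sin`. -/
theorem sinTaylor_gap_poly_nonneg {u : ℝ} (hu₀ : 0 ≤ u) (hu : u ≤ 2.4675) :
    0 ≤ 19/30 - 467/1260 * u + 37/420 * u^2 - 833/64800 * u^3 + 331/272160 * u^4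
      - 1549/20412000 * u^5 + 29/10206000 * u^6 - 1/20412000 * u^7 := by
  have hw : 0 ≤ 2.4675 - u := by linarith
  have hcubic : 0 ≤ 19/30 - 467/1260 * u + 37/420 * u^2 - 833/64800 * u^3 := by
    nlinarith [mul_nonneg hu₀ hw, mul_nonneg (mul_nonneg hu₀ hu₀) hw,
      mul_nonneg (mul_nonneg hu₀ hw) hw, sq_nonneg (u - 2)]
  have h4 : 0 ≤ u^4 * (331/272160 - 1549/20412000 * u) := mul_nonneg (by positivity) (by linarith)
  have h6 : 0 ≤ u^6 * (29/10206000 - 1/20412000 * u) := mul_nonneg (by positivity) (by linarith)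
  linarith

theorem sin_sq_mul_sin_mul_cos_add_self_le {θ : ℝ} (h₀ : 0 ≤ θ) (h₁ : θ ≤ π / 2) :
    sin θ ^ 2 * (sin θ * cos θ + θ) ≤ 6 * (2 * sin θ - sin θ * cos θ - θ) := by
  have hs : 0 ≤ sin θ := sin_nonneg_of_nonneg_of_le_pi h₀ (by linarith [pi_pos])
  have hc : 0 ≤ cos θ := cos_nonneg_of_mem_Icc ⟨by linarith [pi_pos], h₁⟩
  have hsc : sin θ * cos θ = sin (2 * θ) / 2 := by rw [sin_two_mul]; ring
  have hL := sinTaylor_le_sin_of_odd (n := 3) (by decide) h₀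
  have hU := sin_le_sinTaylor_of_even (n := 2) (by decide) h₀
  have hV := sin_le_sinTaylor_of_even (n := 4) (by decide) (by positivity : 0 ≤ 2 * θ)
  have hθ : θ ^ 2 ≤ 2.4675 := by nlinarith [pi_lt_d4]
  calc sin θ ^ 2 * (sin θ * cos θ + θ)
      ≤ sinTaylor 3 θ ^ 2 * (sinTaylor 5 (2 * θ) / 2 + θ) :=
        mul_le_mul (pow_le_pow_left₀ hs hU 2) (by linarith) (by positivity) (sq_nonneg _)
    _ = 6 * (2 * sinTaylor 4 θ - sinTaylor 5 (2 * θ) / 2 - θ) - θ ^ 5 *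
          (19/30 - 467/1260 * θ^2 + 37/420 * (θ^2)^2 - 833/64800 * (θ^2)^3
            + 331/272160 * (θ^2)^4 - 1549/20412000 * (θ^2)^5 + 29/10206000 * (θ^2)^6
            - 1/20412000 * (θ^2)^7) := by
        simp [sinTaylor, Finset.sum_range_succ, Nat.factorial]
        ring
    _ ≤ 6 * (2 * sinTaylor 4 θ - sinTaylor 5 (2 * θ) / 2 - θ) :=
        sub_le_self _ (mul_nonneg (by positivity) (sinTaylor_gap_poly_nonneg (by positivity) hθ))
    _ ≤ 6 * (2 * sin θ - sin θ * cos θ - θ) := by linarith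

/-- For θ ∈ (0, π/2), with ρ = sin θ / 2 and |E| = (1/2) cos θ sin θ + θ/4 - (1/8) sin 2θ,
one has 2(ρ - |E|)/(ρ²|E|) = 8(2 sin θ - sin θ cos θ - θ)/(sin²θ (sin θ cos θ + θ)) ≥ 4/3. -/
theorem stmt8 :
    ∀ θ ∈ Ioo (0:ℝ) (π/2),
      (2 * ((Real.sin θ / 2) -
          ((1/2) * Real.cos θ * Real.sin θ + θ/4 - (1/8) * Real.sin (2*θ))) /
        ((Real.sin θ / 2)^2 *
          ((1/2) * Real.cos θ * Real.sin θ + θ/4 - (1/8) * Real.sin (2*θ)))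
      = 8 * (2 * Real.sin θ - Real.sin θ * Real.cos θ - θ) /
          ((Real.sin θ)^2 * (Real.sin θ * Real.cos θ + θ))) ∧
      (4/3 : ℝ) ≤ 8 * (2 * Real.sin θ - Real.sin θ * Real.cos θ - θ) /
          ((Real.sin θ)^2 * (Real.sin θ * Real.cos θ + θ)) := by
  rintro θ ⟨h₀, h₁⟩
  have hs : 0 < sin θ := sin_pos_of_pos_of_lt_pi h₀ (by linarith [pi_pos])
  have hD : 0 < sin θ * cos θ + θ := by
    have := cos_nonneg_of_mem_Icc ⟨by linarith [pi_pos], h₁.le⟩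
    positivity
  have hE : (1/2) * cos θ * sin θ + θ/4 - (1/8) * sin (2*θ) = (sin θ * cos θ + θ) / 4 := by
    rw [sin_two_mul]; ring
  refine ⟨?_, ?_⟩
  · rw [hE]
    field_simp
    ring
  · rw [le_div_iff₀ (by positivity)]
    linarith [sin_sq_mul_sin_mul_cos_add_self_le h₀.le h₁.le]
end

section
/- 12 cos θ - 12 cos²θ - 4 sin²θ cos²θ - 2θ sin θ cos θ ≥ 0 for all θ ∈ (0, π/2). -/
open Real Set

/-- 12 cos θ - 12 cos²θ - 4 sin²θ cos²θ - 2θ sin θ cos θ ≥ 0 on (0, π/2). -/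
theorem stmt10 :
    ∀ θ ∈ Ioo (0:ℝ) (π/2),
      0 ≤ 12 * Real.cos θ - 12 * (Real.cos θ)^2
          - 4 * (Real.sin θ)^2 * (Real.cos θ)^2 - 2 * θ * Real.sin θ * Real.cos θ := by
  intro θ hθ
  obtain ⟨h0, h2⟩ := hθ
  have hpi := Real.pi_pos
  have hs : 0 < Real.sin θ := Real.sin_pos_of_pos_of_lt_pi h0 (by linarith)
  have hc : 0 < Real.cos θ := Real.cos_pos_of_mem_Ioo ⟨by linarith, h2⟩
  have hpyth : Real.sin θ ^ 2 + Real.cos θ ^ 2 = 1 := Real.sin_sq_add_cos_sq θ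
  have hs1 : Real.sin θ ≤ 1 := Real.sin_le_one θ
  have hc1 : Real.cos θ ≤ 1 := Real.cos_le_one θ
  have htan : θ * Real.cos θ < Real.sin θ := by
    have h := Real.lt_tan h0 h2
    rw [Real.tan_eq_sin_div_cos] at h
    exact (lt_div_iff₀ hc).mp h
  rcases le_or_gt (Real.cos θ) (1/2) with hle | hgt
  · have hπ : π < 3.15 := Real.pi_lt_d2
    have hθπ : θ ≤ π / 2 := le_of_lt h2
    have h1 : θ * (Real.sin θ * Real.cos θ) ≤ (π/2) * (Real.sin θ * Real.cos θ) :=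
      mul_le_mul_of_nonneg_right hθπ (mul_nonneg hs.le hc.le)
    have h2' : Real.sin θ * Real.cos θ ≤ Real.cos θ := by nlinarith
    nlinarith [mul_pos hs hc, sq_nonneg (Real.sin θ), mul_nonneg hs.le hc.le]
  · have key : θ * Real.sin θ * Real.cos θ ≤ Real.sin θ ^ 2 := by nlinarith
    nlinarith [sq_nonneg (Real.cos θ - 1), mul_pos hs hc,
      sq_nonneg (Real.cos θ - 1), hgt]
end

section
/- Let u ∈ W^{1,1}(0,1) with weight ρ positive and continuous, satisfying ∫₀¹ u ρ = 0, and suppose J_ρ(x) ≤ 1/4 for all x ∈ (0,1), where J_ρ(x) = (∫₀ˣρ)(∫ₓ¹ρ)/((∫₀¹ρ)ρ(x)). Then ∫₀¹ |u| ρ ≤ (1/2) ∫₀¹ |u'| ρ. -/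
/-!
Write `F x = ∫_a^x ρ`, `G x = ∫_x^b ρ` and `R = F + G = ∫_a^b ρ`, so that `weightJ ρ a b` is the
`J_ρ = F G / (R ρ)` of Acosta–Durán. Integrating by parts against `F` on `[a, x]` and against `G`
on `[x, b]`, the zero weighted mean gives `R u(x) = ∫_a^x F u' - ∫_x^b G u'`. Taking absolute
values, multiplying by `ρ(x)` and integrating, Fubini turns each of the two double integrals into
`∫ F G |u'|`; this is `∫ |u| ρ ≤ 2 ∫ |u'| ρ J_ρ`, and `J_ρ ≤ 1/4` finishes the proof.
-/

open Set MeasureTheory intervalIntegral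

noncomputable def weightJ (ρ : ℝ → ℝ) (a b x : ℝ) : ℝ :=
  (∫ t in a..x, ρ t) * (∫ t in x..b, ρ t) / ((∫ t in a..b, ρ t) * ρ x)

section

variable {a b : ℝ} {f g ρ u u' : ℝ → ℝ}

lemma IntervalIntegrable.continuousOn_primitive_Icc (hab : a ≤ b)
    (hf : IntervalIntegrable f volume a b) :
    ContinuousOn (fun x => ∫ t in a..x, f t) (Icc a b) := by
  simpa only [uIcc_of_le hab] using continuousOn_primitive_interval' hf left_mem_uIcc

lemma IntervalIntegrable.continuousOn_primitive_left_Icc (hab : a ≤ b)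
    (hf : IntervalIntegrable f volume a b) :
    ContinuousOn (fun x => ∫ t in x..b, f t) (Icc a b) := by
  rw [← uIcc_of_le hab]
  exact (continuousOn_primitive_interval' hf right_mem_uIcc).neg.congr fun x _ =>
    integral_symm b x

lemma integral_hasDerivAt_right_of_continuousOn (hρ : ContinuousOn ρ (Icc a b)) {x : ℝ}
    (hx : x ∈ Ioo a b) : HasDerivAt (fun y => ∫ t in a..y, ρ t) (ρ x) x :=
  integral_hasDerivAt_right
    ((hρ.mono (Icc_subset_Icc_right hx.2.le)).intervalIntegrable_of_Icc hx.1.le)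
    ((hρ.mono Ioo_subset_Icc_self).stronglyMeasurableAtFilter isOpen_Ioo x hx)
    (hρ.continuousAt (Icc_mem_nhds hx.1 hx.2))

lemma integral_hasDerivAt_left_of_continuousOn (hρ : ContinuousOn ρ (Icc a b)) {x : ℝ}
    (hx : x ∈ Ioo a b) : HasDerivAt (fun y => ∫ t in y..b, ρ t) (-ρ x) x :=
  integral_hasDerivAt_left
    ((hρ.mono (Icc_subset_Icc_left hx.1.le)).intervalIntegrable_of_Icc hx.2.le)
    ((hρ.mono Ioo_subset_Icc_self).stronglyMeasurableAtFilter isOpen_Ioo x hx)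
    (hρ.continuousAt (Icc_mem_nhds hx.1 hx.2))

lemma abs_integral_mul_le_integral_mul_abs (hab : a ≤ b) (hg : ∀ t ∈ Icc a b, 0 ≤ g t) :
    |∫ t in a..b, g t * f t| ≤ ∫ t in a..b, g t * |f t| :=
  (abs_integral_le_integral_abs hab).trans_eq <| integral_congr fun t ht => by
    rw [uIcc_of_le hab] at ht
    rw [abs_mul, abs_of_nonneg (hg t ht)]

lemma IntervalIntegrable.of_abs_mul_pos (hab : a ≤ b) (hρ : ContinuousOn ρ (Icc a b))
    (hρpos : ∀ x ∈ Icc a b, 0 < ρ x) (hf : AEStronglyMeasurable f (volume.restrict (Ioc a b)))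
    (hfρ : IntervalIntegrable (fun x => |f x| * ρ x) volume a b) :
    IntervalIntegrable f volume a b := by
  rw [intervalIntegrable_iff_integrableOn_Ioc_of_le hab] at hfρ ⊢
  have hdiv : IntegrableOn (fun x => |f x| * ρ x * (ρ x)⁻¹) (Ioc a b) :=
    hfρ.mul_continuousOn_of_subset (hρ.inv₀ fun x hx => (hρpos x hx).ne') measurableSet_Ioc
      isCompact_Icc Ioc_subset_Icc_self
  refine (integrable_norm_iff hf).1 (hdiv.congr_fun (fun x hx => ?_) measurableSet_Ioc)
  simp only [mul_inv_cancel_right₀ (hρpos x (Ioc_subset_Icc_self hx)).ne', Real.norm_eq_abs]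

theorem integral_mul_primitive_eq_integral_tail_mul (hab : a ≤ b)
    (hρ : IntervalIntegrable ρ volume a b) (hf : IntervalIntegrable f volume a b) :
    ∫ x in a..b, ρ x * ∫ t in a..x, f t = ∫ t in a..b, (∫ x in t..b, ρ x) * f t := by
  rw [intervalIntegrable_iff_integrableOn_Ioc_of_le hab] at hρ hf
  set ν := volume.restrict (Ioc a b)
  set K : ℝ × ℝ → ℝ := {q | q.2 ≤ q.1}.indicator fun q => ρ q.1 * f q.2 with hK_def
  have hK : Integrable K (ν.prod ν) :=
    (hρ.mul_prod hf).indicator (measurableSet_le measurable_snd measurable_fst)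
  have hleft : ∀ x ∈ Ioc a b, ρ x * ∫ t in a..x, f t = ∫ t, K (x, t) ∂ν := by
    intro x hx
    have : (fun t => K (x, t)) = fun t => ρ x * (Iic x).indicator f t := by
      ext t; by_cases h : t ≤ x <;> simp [hK_def, h]
    rw [this, MeasureTheory.integral_const_mul, setIntegral_indicator measurableSet_Iic,
      Ioc_inter_Iic, min_eq_right hx.2, integral_of_le hx.1.le]
  have hright : ∀ t ∈ Ioc a b, (∫ x in t..b, ρ x) * f t = ∫ x, K (x, t) ∂ν := by
    intro t ht
    have : (fun x => K (x, t)) = fun x => (Ici t).indicator ρ x * f t := by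
      ext x; by_cases h : t ≤ x <;> simp [hK_def, h]
    have hset : Ioc a b ∩ Ici t = Icc t b :=
      Set.ext fun _ => ⟨fun h => ⟨h.2, h.1.2⟩, fun h => ⟨⟨ht.1.trans_le h.1, h.2⟩, h.1⟩⟩
    rw [this, MeasureTheory.integral_mul_const, setIntegral_indicator measurableSet_Ici, hset,
      integral_Icc_eq_integral_Ioc, ← integral_of_le ht.2]
  rw [integral_of_le hab, integral_of_le hab, setIntegral_congr_fun measurableSet_Ioc hleft,
    setIntegral_congr_fun measurableSet_Ioc hright]
  exact integral_integral_swap hK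

theorem integral_primitive_mul_deriv (hab : a ≤ b) (hρ : ContinuousOn ρ (Icc a b))
    (hu : ∀ x ∈ Icc a b, HasDerivAt u (u' x) x) (hu' : IntervalIntegrable u' volume a b) :
    ∫ t in a..b, (∫ s in a..t, ρ s) * u' t
      = (∫ s in a..b, ρ s) * u b - ∫ t in a..b, ρ t * u t := by
  have hρi : IntervalIntegrable ρ volume a b := hρ.intervalIntegrable_of_Icc hab
  have hI : Ioo (min a b) (max a b) = Ioo a b := by rw [min_eq_left hab, max_eq_right hab]
  rw [integral_mul_deriv_eq_deriv_mul_of_hasDerivAt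
      (uIcc_of_le hab ▸ hρi.continuousOn_primitive_Icc hab)
      (fun y hy => (hu y (uIcc_of_le hab ▸ hy)).continuousAt.continuousWithinAt)
      (fun y hy => integral_hasDerivAt_right_of_continuousOn hρ (hI ▸ hy))
      (fun y hy => hu y (Ioo_subset_Icc_self (hI ▸ hy))) hρi hu',
    integral_same, zero_mul, sub_zero]

theorem integral_tail_mul_deriv (hab : a ≤ b) (hρ : ContinuousOn ρ (Icc a b))
    (hu : ∀ x ∈ Icc a b, HasDerivAt u (u' x) x) (hu' : IntervalIntegrable u' volume a b) :
    ∫ t in a..b, (∫ s in t..b, ρ s) * u' t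
      = -((∫ s in a..b, ρ s) * u a) + ∫ t in a..b, ρ t * u t := by
  have hρi : IntervalIntegrable ρ volume a b := hρ.intervalIntegrable_of_Icc hab
  have hI : Ioo (min a b) (max a b) = Ioo a b := by rw [min_eq_left hab, max_eq_right hab]
  rw [integral_mul_deriv_eq_deriv_mul_of_hasDerivAt
      (uIcc_of_le hab ▸ hρi.continuousOn_primitive_left_Icc hab)
      (fun y hy => (hu y (uIcc_of_le hab ▸ hy)).continuousAt.continuousWithinAt)
      (fun y hy => integral_hasDerivAt_left_of_continuousOn hρ (hI ▸ hy))
      (fun y hy => hu y (Ioo_subset_Icc_self (hI ▸ hy))) hρi.neg hu',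
    integral_same, zero_mul]
  simp only [neg_mul, intervalIntegral.integral_neg]
  ring

theorem mul_eq_integral_sub_integral_of_integral_mul_eq_zero (hρ : ContinuousOn ρ (Icc a b))
    (hu : ∀ x ∈ Icc a b, HasDerivAt u (u' x) x) (hu' : IntervalIntegrable u' volume a b)
    (hmean : ∫ x in a..b, u x * ρ x = 0) {x : ℝ} (hx : x ∈ Icc a b) :
    (∫ t in a..b, ρ t) * u x
      = (∫ t in a..x, (∫ s in a..t, ρ s) * u' t)
        - ∫ t in x..b, (∫ s in t..b, ρ s) * u' t := by
  have hab : a ≤ b := hx.1.trans hx.2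
  have hax : Icc a x ⊆ Icc a b := Icc_subset_Icc_right hx.2
  have hxb : Icc x b ⊆ Icc a b := Icc_subset_Icc_left hx.1
  have hρi : IntervalIntegrable ρ volume a b := hρ.intervalIntegrable_of_Icc hab
  have hρu : IntervalIntegrable (fun t => ρ t * u t) volume a b :=
    (hρ.mul fun y hy => (hu y hy).continuousAt.continuousWithinAt).intervalIntegrable_of_Icc hab
  have hsub : ∀ {c d}, c ∈ Icc a b → d ∈ Icc a b → uIcc c d ⊆ uIcc a b :=
    fun hc hd => (uIcc_of_le hab).symm ▸ uIcc_subset_Icc hc hd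
  have hma : a ∈ Icc a b := left_mem_Icc.2 hab
  have hmb : b ∈ Icc a b := right_mem_Icc.2 hab
  rw [integral_primitive_mul_deriv hx.1 (hρ.mono hax) (fun y hy => hu y (hax hy))
      (hu'.mono_set (hsub hma hx)),
    integral_tail_mul_deriv hx.2 (hρ.mono hxb) (fun y hy => hu y (hxb hy))
      (hu'.mono_set (hsub hx hmb)),
    ← integral_add_adjacent_intervals (hρi.mono_set (hsub hma hx)) (hρi.mono_set (hsub hx hmb))]
  have hsplit := integral_add_adjacent_intervals (hρu.mono_set (hsub hma hx))
    (hρu.mono_set (hsub hx hmb))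
  have hmean' : ∫ t in a..b, ρ t * u t = 0 := by simpa only [mul_comm] using hmean
  linear_combination hsplit + hmean'

theorem mul_abs_le_of_integral_mul_eq_zero (hρ : ContinuousOn ρ (Icc a b))
    (hρ0 : ∀ x ∈ Icc a b, 0 ≤ ρ x) (hu : ∀ x ∈ Icc a b, HasDerivAt u (u' x) x)
    (hu' : IntervalIntegrable u' volume a b) (hmean : ∫ x in a..b, u x * ρ x = 0) {x : ℝ}
    (hx : x ∈ Icc a b) :
    (∫ t in a..b, ρ t) * |u x|
      ≤ (∫ t in a..x, (∫ s in a..t, ρ s) * |u' t|)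
        + ∫ t in x..b, (∫ s in t..b, ρ s) * |u' t| := by
  have hR : 0 ≤ ∫ t in a..b, ρ t := integral_nonneg (hx.1.trans hx.2) hρ0
  calc (∫ t in a..b, ρ t) * |u x| = |(∫ t in a..b, ρ t) * u x| := by
        rw [abs_mul, abs_of_nonneg hR]
    _ = |(∫ t in a..x, (∫ s in a..t, ρ s) * u' t)
          - ∫ t in x..b, (∫ s in t..b, ρ s) * u' t| := by
        rw [mul_eq_integral_sub_integral_of_integral_mul_eq_zero hρ hu hu' hmean hx]
    _ ≤ |∫ t in a..x, (∫ s in a..t, ρ s) * u' t|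
          + |∫ t in x..b, (∫ s in t..b, ρ s) * u' t| := abs_sub _ _
    _ ≤ _ := add_le_add
        (abs_integral_mul_le_integral_mul_abs hx.1 fun t ht =>
          integral_nonneg ht.1 fun s hs => hρ0 s ⟨hs.1, hs.2.trans (ht.2.trans hx.2)⟩)
        (abs_integral_mul_le_integral_mul_abs hx.2 fun t ht =>
          integral_nonneg ht.2 fun s hs => hρ0 s ⟨hx.1.trans (ht.1.trans hs.1), hs.2⟩)

theorem mul_integral_abs_mul_le_of_integral_mul_eq_zero (hab : a ≤ b)
    (hρ : ContinuousOn ρ (Icc a b)) (hρ0 : ∀ x ∈ Icc a b, 0 ≤ ρ x)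
    (hu : ∀ x ∈ Icc a b, HasDerivAt u (u' x) x) (hu' : IntervalIntegrable u' volume a b)
    (hmean : ∫ x in a..b, u x * ρ x = 0) :
    (∫ t in a..b, ρ t) * ∫ x in a..b, |u x| * ρ x ≤
      2 * ∫ t in a..b, (∫ s in a..t, ρ s) * (∫ s in t..b, ρ s) * |u' t| := by
  set F := fun t => ∫ s in a..t, ρ s
  set G := fun t => ∫ s in t..b, ρ s
  have hρi : IntervalIntegrable ρ volume a b := hρ.intervalIntegrable_of_Icc hab
  have hF : ContinuousOn F (uIcc a b) := uIcc_of_le hab ▸ hρi.continuousOn_primitive_Icc hab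
  have hG : ContinuousOn G (uIcc a b) := uIcc_of_le hab ▸ hρi.continuousOn_primitive_left_Icc hab
  have hFu : IntervalIntegrable (fun t => F t * |u' t|) volume a b := hu'.abs.continuousOn_mul hF
  have hGu : IntervalIntegrable (fun t => G t * |u' t|) volume a b := hu'.abs.continuousOn_mul hG
  have hA : ContinuousOn (fun x => ∫ t in a..x, F t * |u' t|) (Icc a b) :=
    hFu.continuousOn_primitive_Icc hab
  have hB : ContinuousOn (fun x => ∫ t in x..b, G t * |u' t|) (Icc a b) :=
    hGu.continuousOn_primitive_left_Icc hab
  have huc : ContinuousOn u (Icc a b) := fun y hy => (hu y hy).continuousAt.continuousWithinAt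
  calc (∫ t in a..b, ρ t) * ∫ x in a..b, |u x| * ρ x
      = ∫ x in a..b, ρ x * ((∫ t in a..b, ρ t) * |u x|) := by
        rw [← intervalIntegral.integral_const_mul]
        exact integral_congr fun _ _ => by ring
    _ ≤ ∫ x in a..b, ρ x * ((∫ t in a..x, F t * |u' t|) + ∫ t in x..b, G t * |u' t|) :=
        integral_mono_on hab
          ((hρ.mul (continuousOn_const.mul huc.abs)).intervalIntegrable_of_Icc hab)
          ((hρ.mul (hA.add hB)).intervalIntegrable_of_Icc hab) fun x hx =>
            mul_le_mul_of_nonneg_left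
              (mul_abs_le_of_integral_mul_eq_zero hρ hρ0 hu hu' hmean hx) (hρ0 x hx)
    _ = (∫ x in a..b, ρ x * ∫ t in a..x, F t * |u' t|)
          + ∫ x in a..b, (∫ t in x..b, G t * |u' t|) * ρ x := by
        rw [← intervalIntegral.integral_add]
        · exact integral_congr fun _ _ => by ring
        · exact (hρ.mul hA).intervalIntegrable_of_Icc hab
        · exact (hB.mul hρ).intervalIntegrable_of_Icc hab
    _ = (∫ t in a..b, G t * (F t * |u' t|)) + ∫ t in a..b, G t * |u' t| * F t := by
        rw [integral_mul_primitive_eq_integral_tail_mul hab hρi hFu,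
          ← integral_mul_primitive_eq_integral_tail_mul hab hGu hρi]
    _ = 2 * ∫ t in a..b, F t * G t * |u' t| := by
        rw [← intervalIntegral.integral_add (hFu.continuousOn_mul hG) (hGu.mul_continuousOn hF),
          ← intervalIntegral.integral_const_mul]
        exact integral_congr fun _ _ => by ring

lemma continuousOn_weightJ (hab : a < b) (hρ : ContinuousOn ρ (Icc a b))
    (hρpos : ∀ x ∈ Icc a b, 0 < ρ x) : ContinuousOn (weightJ ρ a b) (Icc a b) := by
  have hρi : IntervalIntegrable ρ volume a b := hρ.intervalIntegrable_of_Icc hab.le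
  have hR : 0 < ∫ t in a..b, ρ t :=
    intervalIntegral_pos_of_pos_on hρi (fun x hx => hρpos x (Ioo_subset_Icc_self hx)) hab
  exact ((hρi.continuousOn_primitive_Icc hab.le).mul
    (hρi.continuousOn_primitive_left_Icc hab.le)).div (continuousOn_const.mul hρ)
    fun x hx => (mul_pos hR (hρpos x hx)).ne'

theorem integral_abs_mul_le_two_mul_integral_abs_deriv_mul_weightJ (hab : a < b)
    (hρ : ContinuousOn ρ (Icc a b)) (hρpos : ∀ x ∈ Icc a b, 0 < ρ x)
    (hu : ∀ x ∈ Icc a b, HasDerivAt u (u' x) x) (hu' : IntervalIntegrable u' volume a b)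
    (hmean : ∫ x in a..b, u x * ρ x = 0) :
    ∫ x in a..b, |u x| * ρ x ≤ 2 * ∫ x in a..b, |u' x| * ρ x * weightJ ρ a b x := by
  have hR : 0 < ∫ t in a..b, ρ t :=
    intervalIntegral_pos_of_pos_on (hρ.intervalIntegrable_of_Icc hab.le)
      (fun x hx => hρpos x (Ioo_subset_Icc_self hx)) hab
  have hJ : ∫ x in a..b, |u' x| * ρ x * weightJ ρ a b x
      = (∫ t in a..b, (∫ s in a..t, ρ s) * (∫ s in t..b, ρ s) * |u' t|)
          / ∫ t in a..b, ρ t := by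
    rw [← intervalIntegral.integral_div]
    refine integral_congr fun x hx => ?_
    rw [uIcc_of_le hab.le] at hx
    have := (hρpos x hx).ne'
    simp only [weightJ]
    field_simp
  rw [hJ, mul_div_assoc', le_div_iff₀ hR, mul_comm]
  exact mul_integral_abs_mul_le_of_integral_mul_eq_zero hab.le hρ (fun x hx => (hρpos x hx).le)
    hu hu' hmean

end

theorem stmt16_general (ρ u u' : ℝ → ℝ)
    (hρc : ContinuousOn ρ (Icc 0 1))
    (hρpos : ∀ x ∈ Icc (0:ℝ) 1, 0 < ρ x)
    (hu : ∀ x ∈ Icc (0:ℝ) 1, HasDerivAt u (u' x) x)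
    (hu'int : IntervalIntegrable (fun x => |u' x| * ρ x) volume 0 1)
    (hmean : ∫ x in (0:ℝ)..1, u x * ρ x = 0)
    (hJ : ∀ x ∈ Ioo (0:ℝ) 1,
      (∫ t in (0:ℝ)..x, ρ t) * (∫ t in x..(1:ℝ), ρ t) /
        ((∫ t in (0:ℝ)..(1:ℝ), ρ t) * ρ x) ≤ 1/4) :
    ∫ x in (0:ℝ)..1, |u x| * ρ x ≤ (1/2) * ∫ x in (0:ℝ)..1, |u' x| * ρ x := by
  have hu'meas : AEStronglyMeasurable u' (volume.restrict (Ioc 0 1)) :=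
    (aestronglyMeasurable_deriv u _).congr <| (ae_restrict_mem measurableSet_Ioc).mono
      fun x hx => (hu x (Ioc_subset_Icc_self hx)).deriv
  have hu' : IntervalIntegrable u' volume 0 1 :=
    .of_abs_mul_pos zero_le_one hρc hρpos hu'meas hu'int
  have hJc : ContinuousOn (weightJ ρ 0 1) (uIcc 0 1) :=
    uIcc_of_le (zero_le_one (α := ℝ)) ▸ continuousOn_weightJ zero_lt_one hρc hρpos
  calc ∫ x in (0:ℝ)..1, |u x| * ρ x
      ≤ 2 * ∫ x in (0:ℝ)..1, |u' x| * ρ x * weightJ ρ 0 1 x :=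
        integral_abs_mul_le_two_mul_integral_abs_deriv_mul_weightJ zero_lt_one hρc hρpos hu hu'
          hmean
    _ ≤ 2 * ∫ x in (0:ℝ)..1, |u' x| * ρ x * (1 / 4) := by
        gcongr
        refine integral_mono_on_of_le_Ioo zero_le_one (hu'int.mul_continuousOn hJc)
          (hu'int.mul_const _) fun x hx => ?_
        exact mul_le_mul_of_nonneg_left (hJ x hx)
          (mul_nonneg (abs_nonneg _) (hρpos x (Ioo_subset_Icc_self hx)).le)
    _ = (1/2) * ∫ x in (0:ℝ)..1, |u' x| * ρ x := by
        rw [intervalIntegral.integral_mul_const]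
        ring

/-- Weighted Poincaré inequality: if ρ is a positive continuous weight on [0,1],
u ∈ W^{1,1}_ρ(0,1) has zero weighted mean, and J_ρ ≤ 1/4 on (0,1), then
∫₀¹|u|ρ ≤ (1/2)∫₀¹|u'|ρ. -/
theorem stmt16 (ρ u u' : ℝ → ℝ)
    (hρc : ContinuousOn ρ (Icc 0 1))
    (hρpos : ∀ x ∈ Icc (0:ℝ) 1, 0 < ρ x)
    (hu : ∀ x ∈ Icc (0:ℝ) 1, HasDerivAt u (u' x) x)
    (hu'int : IntervalIntegrable (fun x => |u' x| * ρ x) volume 0 1)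
    (huint : IntervalIntegrable (fun x => |u x| * ρ x) volume 0 1)
    (hmean : ∫ x in (0:ℝ)..1, u x * ρ x = 0)
    (hJ : ∀ x ∈ Ioo (0:ℝ) 1,
      (∫ t in (0:ℝ)..x, ρ t) * (∫ t in x..(1:ℝ), ρ t) /
        ((∫ t in (0:ℝ)..(1:ℝ), ρ t) * ρ x) ≤ 1/4) :
    ∫ x in (0:ℝ)..1, |u x| * ρ x ≤ (1/2) * ∫ x in (0:ℝ)..1, |u' x| * ρ x :=
  stmt16_general ρ u u' hρc hρpos hu hu'int hmean hJ
end
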